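/- Let A be the adjacency matrix of a signed graph Σ on n vertices with eigenvalue μ ∉ {0,1,−1}, star set S of size k, star complement adjacency matrix C of size t = n−k, and columns s_1,…,s_n of S = (B | C − μI). Then the n functions F_u : ℝ^t → ℝ defined by F_u(x) = (s_uᵀ(μI−C)⁻¹x)³ are linearly independent. -/

import Mathlib

open Matrix

/-- The bilinear form `⟨x, y⟩ = xᵀ (μI - C)⁻¹ y` associated with a star complement. -/
noncomputable def starBilin {t : ℕ} (μ : ℝ) (C : Matrix (Fin t) (Fin t) ℝ) (x y : Fin t → ℝ) : ℝ :=
  x ⬝ᵥ ((μ • (1 : Matrix (Fin t) (Fin t) ℝ) - C)⁻¹).mulVec y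

/-!
Put `f_u x = s_uᵀ (μI - C)⁻¹ x`; the star complement equation says exactly that
`f_u (s_v) = (μI - A)_{uv}`. Suppose `∑ g_u f_u³ = 0`. Since the entries of `A` lie in
`{0, 1, -1}` and its diagonal vanishes, cubing `μI - A` entrywise gives `μ³I - A`, so evaluating
at the `s_v` shows that `g` is a `μ³`-eigenvector of `A`. Polarizing gives
`∑ g_u f_u(x)² f_u = 0`, and evaluating this at the `s_v` shows that `γ_u = g_u f_u(x)²` is a
`μ`-eigenvector. As `μ³ ≠ μ` and `A` is symmetric, `0 = g ⬝ γ = ∑ (g_u f_u x)²`, so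
every `g_u f_u` vanishes; at `x = s_u`, where `f_u = μ ≠ 0`, this gives `g_u = 0`.
-/

namespace Matrix

variable {ι : Type*} [DecidableEq ι]

theorem smul_one_sub_apply_pow_three {R : Type*} [CommRing R] {A : Matrix ι ι R}
    (hentries : ∀ p q, A p q ∈ ({0, 1, -1} : Set R)) (hdiag : ∀ p, A p p = 0)
    (μ : R) (u v : ι) :
    (μ • (1 : Matrix ι ι R) - A) u v ^ 3 = (μ ^ 3 • (1 : Matrix ι ι R) - A) u v := by
  by_cases huv : u = v
  · subst huv
    simp [hdiag]
  · have h := hentries u v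
    simp only [Set.mem_insert_iff, Set.mem_singleton_iff] at h
    rcases h with h | h | h <;> norm_num [huv, h]

variable [Fintype ι] {K : Type*} [Field K]

theorem dotProduct_eq_zero_of_vecMul_smul_one_sub_eq_zero {A : Matrix ι ι K} (hA : A.IsSymm)
    {a b : K} (hab : a ≠ b) {x y : ι → K} (hx : x ᵥ* (a • 1 - A) = 0)
    (hy : y ᵥ* (b • 1 - A) = 0) : x ⬝ᵥ y = 0 := by
  rw [vecMul_sub, vecMul_smul, vecMul_one, sub_eq_zero] at hx hy
  have h : a * (x ⬝ᵥ y) = b * (x ⬝ᵥ y) :=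
    calc a * (x ⬝ᵥ y) = (x ᵥ* A) ⬝ᵥ y := by rw [← hx, smul_dotProduct, smul_eq_mul]
      _ = x ⬝ᵥ (y ᵥ* A) := by rw [← dotProduct_mulVec, ← vecMul_transpose, hA.eq]
      _ = b * (x ⬝ᵥ y) := by rw [← hy, dotProduct_smul, smul_eq_mul]
  exact (mul_eq_mul_right_iff.mp h).resolve_left hab

theorem isUnit_det_smul_one_sub {C : Matrix ι ι K} {μ : K}
    (hC : ¬ ∃ v : ι → K, v ≠ 0 ∧ C *ᵥ v = μ • v) :
    IsUnit (μ • (1 : Matrix ι ι K) - C).det := by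
  rw [isUnit_iff_ne_zero, Ne, ← exists_mulVec_eq_zero_iff]
  rintro ⟨v, hv0, hv⟩
  rw [sub_mulVec, smul_mulVec, one_mulVec, sub_eq_zero] at hv
  exact hC ⟨v, hv0, hv.symm⟩

theorem fromCols_transpose_mul_inv_mul_fromCols {m : Type*} [DecidableEq m]
    {AS : Matrix m m K} {B : Matrix ι m K} {C : Matrix ι ι K} {μ : K} (hC : C.IsSymm)
    (hdet : IsUnit (μ • (1 : Matrix ι ι K) - C).det)
    (hrec : μ • 1 - AS = Bᵀ * (μ • 1 - C)⁻¹ * B) :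
    (fromCols B (C - μ • 1))ᵀ * (μ • 1 - C)⁻¹ * fromCols B (C - μ • 1) =
      μ • 1 - fromBlocks AS Bᵀ B C := by
  set M := μ • (1 : Matrix ι ι K) - C
  have hMsymm : Mᵀ = M := by rw [transpose_sub, transpose_smul, transpose_one, hC.eq]
  rw [← neg_sub, transpose_fromCols, transpose_neg, hMsymm, Matrix.mul_assoc, mul_fromCols,
    fromRows_mul_fromCols, ← Matrix.mul_assoc, ← hrec, mul_neg, nonsing_inv_mul M hdet,
    Matrix.neg_mul, mul_nonsing_inv_cancel_left M B hdet]
  conv_rhs =>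
    rw [← fromBlocks_one, fromBlocks_smul, sub_eq_add_neg, fromBlocks_neg, fromBlocks_add]
  simp [M, sub_eq_add_neg]

end Matrix

section LinearFunctionals

variable {ι K V : Type*} [Fintype ι] [Field K] [AddCommGroup V] [Module K V]

theorem sum_mul_sq_mul_eq_zero_of_sum_mul_pow_three_eq_zero [CharZero K] (f : ι → V →ₗ[K] K)
    (g : ι → K) (h : ∀ x, ∑ u, g u * f u x ^ 3 = 0) (x y : V) :
    ∑ u, g u * f u x ^ 2 * f u y = 0 := by
  have key : 6 * ∑ u, g u * f u x ^ 2 * f u y =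
      ∑ u, g u * f u (x + y) ^ 3 - ∑ u, g u * f u (x - y) ^ 3 - 2 * ∑ u, g u * f u y ^ 3 := by
    simp only [Finset.mul_sum, ← Finset.sum_sub_distrib, map_add, map_sub]
    exact Finset.sum_congr rfl fun u _ => by ring
  rw [h, h, h] at key
  simpa using key

theorem linearIndependent_pow_three_of_apply_eq_smul_one_sub [DecidableEq ι] [LinearOrder K]
    [IsStrictOrderedRing K] {A : Matrix ι ι K} (hsymm : A.IsSymm)
    (hentries : ∀ p q, A p q ∈ ({0, 1, -1} : Set K)) (hdiag : ∀ p, A p p = 0) {μ : K}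
    (hμ : μ ^ 3 ≠ μ) (f : ι → V →ₗ[K] K) (s : ι → V)
    (hfs : ∀ u v, f u (s v) = (μ • (1 : Matrix ι ι K) - A) u v) :
    LinearIndependent K fun u x => f u x ^ 3 := by
  rw [Fintype.linearIndependent_iff]
  intro g hg
  have hcube : ∀ x, ∑ u, g u * f u x ^ 3 = 0 := fun x => by simpa using congrFun hg x
  have hg_eigen : g ᵥ* (μ ^ 3 • 1 - A) = 0 := by
    ext v
    have h := hcube (s v)
    simp only [hfs, smul_one_sub_apply_pow_three hentries hdiag] at h
    simpa [vecMul, dotProduct] using h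
  have hvanish : ∀ x u, g u * f u x = 0 := by
    intro x
    have hγ : (fun u => g u * f u x ^ 2) ᵥ* (μ • 1 - A) = 0 := by
      ext v
      simpa [vecMul, dotProduct, hfs] using
        sum_mul_sq_mul_eq_zero_of_sum_mul_pow_three_eq_zero f g hcube x (s v)
    have horth := dotProduct_eq_zero_of_vecMul_smul_one_sub_eq_zero hsymm hμ hg_eigen hγ
    have hsq : (fun u => g u * f u x) ⬝ᵥ (fun u => g u * f u x) = 0 := by
      rw [← horth]
      exact Finset.sum_congr rfl fun u _ => by ring
    exact congrFun (dotProduct_self_eq_zero.mp hsq)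
  intro u
  have h := hvanish (s u) u
  simp only [hfs, Matrix.sub_apply, Matrix.smul_apply, one_apply_eq, hdiag, smul_eq_mul,
    mul_one, sub_zero, mul_eq_zero] at h
  exact h.resolve_right fun hμ0 => hμ (by simp [hμ0])

end LinearFunctionals

theorem cubic_functions_linearly_independent {k t : ℕ}
    (AS : Matrix (Fin k) (Fin k) ℝ) (B : Matrix (Fin t) (Fin k) ℝ)
    (C : Matrix (Fin t) (Fin t) ℝ)
    (A : Matrix (Fin k ⊕ Fin t) (Fin k ⊕ Fin t) ℝ)
    (hA : A = Matrix.fromBlocks AS Bᵀ B C)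
    (hsymm : A.IsSymm)
    (hentries : ∀ p q, A p q ∈ ({0, 1, -1} : Set ℝ))
    (hdiag : ∀ p, A p p = 0)
    (μ : ℝ) (hμ : μ ∉ ({0, 1, -1} : Set ℝ))
    (hC : ¬ ∃ v : Fin t → ℝ, v ≠ 0 ∧ C.mulVec v = μ • v)
    (hrec : μ • (1 : Matrix (Fin k) (Fin k) ℝ) - AS =
      Bᵀ * (μ • (1 : Matrix (Fin t) (Fin t) ℝ) - C)⁻¹ * B)
    (S : Matrix (Fin t) (Fin k ⊕ Fin t) ℝ)
    (hS : S = Matrix.fromCols B (C - μ • (1 : Matrix (Fin t) (Fin t) ℝ)))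
    (F : (Fin k ⊕ Fin t) → (Fin t → ℝ) → ℝ)
    (hF : ∀ u x, F u x = (starBilin μ C (fun i => S i u) x) ^ 3) :
    LinearIndependent ℝ F := by
  have hCsymm : C.IsSymm := (isSymm_fromBlocks_iff.mp (hA ▸ hsymm)).2.2.2
  have hgram : Sᵀ * (μ • 1 - C)⁻¹ * S = μ • 1 - A := by
    rw [hS, hA]
    exact fromCols_transpose_mul_inv_mul_fromCols hCsymm (isUnit_det_smul_one_sub hC) hrec
  have hμ3 : μ ^ 3 ≠ μ := by
    intro h
    have : μ * (μ - 1) * (μ + 1) = 0 := by linear_combination h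
    simp only [mul_eq_zero, sub_eq_zero, add_eq_zero_iff_eq_neg, or_assoc] at this
    exact hμ (by simpa only [Set.mem_insert_iff, Set.mem_singleton_iff] using this)
  have hF' : F = fun u x => toLinearMap₂' ℝ (μ • 1 - C)⁻¹ (Sᵀ u) x ^ 3 := by
    funext u x
    rw [hF, toLinearMap₂'_apply']
    rfl
  rw [hF']
  refine linearIndependent_pow_three_of_apply_eq_smul_one_sub hsymm hentries hdiag hμ3 _ Sᵀ
    fun u v => ?_
  rw [← hgram, toLinearMap₂'_apply', Matrix.mul_assoc, mul_apply']
  rfl
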